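/- Let Z ∈ M_{m·n}(ℂ) be Hermitian and σ ∈ M_n(ℂ) be Hermitian. Define Φ(Z) = Z − (I_m/m) ⊗ (tr_1(Z) − σ). Then tr_1(Φ(Z)) = σ, and for every Hermitian X ∈ M_{m·n}(ℂ) with tr_1(X) = σ, one has ‖Z − Φ(Z)‖_F ≤ ‖Z − X‖_F. -/

import Mathlib

open Matrix Kronecker Finset

/-- Partial trace over the first subsystem: `tr_1(ρ) = Σ_j ρ_{jj} ∈ M_n`. -/
noncomputable def trace1 {m n : ℕ} (ρ : Matrix (Fin m × Fin n) (Fin m × Fin n) ℂ) :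
    Matrix (Fin n) (Fin n) ℂ :=
  Matrix.of fun i j => ∑ k : Fin m, ρ (k, i) (k, j)

/-- Frobenius norm of a square complex matrix. -/
noncomputable def frobNorm {n : Type*} [Fintype n] (X : Matrix n n ℂ) : ℝ :=
  Real.sqrt ((Xᴴ * X).trace.re)

/-!
If `tr_1 X = σ` then `Z - Φ(Z) = (I_m/m) ⊗ tr_1(Z - X)`. The Frobenius norm is multiplicative
on Kronecker products and `‖I_m/m‖ = 1/√m`, while `tr_1 Y` is the sum of the `m` diagonal
blocks of `Y`, so Cauchy–Schwarz gives `‖tr_1 Y‖ ≤ √m ‖Y‖`. Hence `‖Z - Φ(Z)‖ ≤ ‖Z - X‖`.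
-/

attribute [local instance] Matrix.frobeniusSeminormedAddCommGroup
  Matrix.frobeniusNormedAddCommGroup Matrix.frobeniusNormSMulClass

namespace Matrix

variable {ι κ α : Type*} [Fintype ι] [Fintype κ]

theorem frobenius_norm_sq_eq_sum [SeminormedAddCommGroup α] (A : Matrix ι κ α) :
    ‖A‖ ^ 2 = ∑ i, ∑ j, ‖A i j‖ ^ 2 := by
  change ‖WithLp.toLp 2 fun i => WithLp.toLp 2 (A i)‖ ^ 2 = _
  simp [PiLp.norm_sq_eq_of_L2]

theorem frobenius_norm_kronecker [NormedRing α] [NormMulClass α] {ι' κ' : Type*} [Fintype ι']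
    [Fintype κ'] (A : Matrix ι κ α) (B : Matrix ι' κ' α) : ‖A ⊗ₖ B‖ = ‖A‖ * ‖B‖ := by
  rw [← sq_eq_sq₀ (norm_nonneg _) (by positivity), mul_pow, frobenius_norm_sq_eq_sum,
    frobenius_norm_sq_eq_sum, frobenius_norm_sq_eq_sum, Finset.sum_mul_sum]
  simp only [Fintype.sum_prod_type, kroneckerMap_apply, norm_mul, mul_pow, Finset.sum_mul_sum]

theorem sum_frobenius_norm_sq_diagonal_block_le [SeminormedAddCommGroup α]
    (Y : Matrix (ι × κ) (ι × κ) α) :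
    ∑ k, ‖Y.submatrix (k, ·) (k, ·)‖ ^ 2 ≤ ‖Y‖ ^ 2 := by
  simp only [frobenius_norm_sq_eq_sum, Fintype.sum_prod_type, submatrix_apply]
  gcongr with k _ i _
  exact Finset.single_le_sum (f := fun l => ∑ j, ‖Y (k, i) (l, j)‖ ^ 2)
    (fun _ _ => by positivity) (Finset.mem_univ k)

theorem frobenius_norm_inv_natCast_smul_one (m : ℕ) :
    ‖(m : ℂ)⁻¹ • (1 : Matrix (Fin m) (Fin m) ℂ)‖ = (√m)⁻¹ := by
  rw [norm_smul, ← coe_nnnorm (1 : Matrix _ _ ℂ), frobenius_nnnorm_one]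
  simp only [norm_inv, Complex.norm_natCast, Fintype.card_fin, nnnorm_one, mul_one,
    Real.coe_sqrt, NNReal.coe_natCast]
  rw [inv_mul_eq_div, Real.sqrt_div_self', one_div]

theorem trace_inv_natCast_smul_one {m : ℕ} (hm : 0 < m) :
    ((m : ℂ)⁻¹ • (1 : Matrix (Fin m) (Fin m) ℂ)).trace = 1 := by
  simp [inv_mul_cancel₀ (Nat.cast_ne_zero.mpr hm.ne' : (m : ℂ) ≠ 0)]

end Matrix

theorem frobNorm_eq_norm {ι : Type*} [Fintype ι] (X : Matrix ι ι ℂ) : frobNorm X = ‖X‖ := by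
  suffices (Xᴴ * X).trace.re = ‖X‖ ^ 2 by rw [frobNorm, this, Real.sqrt_sq (norm_nonneg X)]
  rw [frobenius_norm_sq_eq_sum, trace, Complex.re_sum, Finset.sum_comm]
  simp only [diag_apply, mul_apply, conjTranspose_apply, RCLike.star_def, Complex.conj_mul',
    Complex.re_sum]
  norm_cast

section trace1

variable {m n : ℕ}

theorem trace1_sub (A B : Matrix (Fin m × Fin n) (Fin m × Fin n) ℂ) :
    trace1 (A - B) = trace1 A - trace1 B := by
  ext i j
  simp [trace1]

theorem trace1_kronecker (A : Matrix (Fin m) (Fin m) ℂ) (B : Matrix (Fin n) (Fin n) ℂ) :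
    trace1 (A ⊗ₖ B) = A.trace • B := by
  ext i j
  simp [trace1, trace, Finset.sum_mul]

theorem trace1_eq_sum_submatrix (Y : Matrix (Fin m × Fin n) (Fin m × Fin n) ℂ) :
    trace1 Y = ∑ k, Y.submatrix (k, ·) (k, ·) := by
  ext i j
  simp [trace1, Matrix.sum_apply]

theorem frobenius_norm_trace1_le (Y : Matrix (Fin m × Fin n) (Fin m × Fin n) ℂ) :
    ‖trace1 Y‖ ≤ √m * ‖Y‖ := by
  rw [← Real.sqrt_sq (norm_nonneg Y), ← Real.sqrt_mul (Nat.cast_nonneg m)]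
  apply Real.le_sqrt_of_sq_le
  calc ‖trace1 Y‖ ^ 2 ≤ (∑ k, ‖Y.submatrix (k, ·) (k, ·)‖) ^ 2 := by
        rw [trace1_eq_sum_submatrix]
        gcongr
        exact norm_sum_le _ _
    _ ≤ m * ∑ k, ‖Y.submatrix (k, ·) (k, ·)‖ ^ 2 := by
        simpa using sq_sum_le_card_mul_sum_sq (s := Finset.univ)
          (f := fun k : Fin m => ‖Y.submatrix (k, ·) (k, ·)‖)
    _ ≤ m * ‖Y‖ ^ 2 := by
        gcongr
        exact sum_frobenius_norm_sq_diagonal_block_le Y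

end trace1

theorem stmt12_general {m n : ℕ} (hm : 0 < m)
    (Z : Matrix (Fin m × Fin n) (Fin m × Fin n) ℂ)
    (σ : Matrix (Fin n) (Fin n) ℂ)
    (Φ : Matrix (Fin m × Fin n) (Fin m × Fin n) ℂ)
    (hΦ : Φ = Z - ((m : ℂ)⁻¹ • (1 : Matrix (Fin m) (Fin m) ℂ)) ⊗ₖ (trace1 Z - σ)) :
    trace1 Φ = σ ∧
      ∀ X : Matrix (Fin m × Fin n) (Fin m × Fin n) ℂ,
        X.IsHermitian → trace1 X = σ →
          frobNorm (Z - Φ) ≤ frobNorm (Z - X) := by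
  refine ⟨?_, fun X _ hX => ?_⟩
  · rw [hΦ, trace1_sub, trace1_kronecker, trace_inv_natCast_smul_one hm, one_smul,
      sub_sub_cancel]
  · have hsqrt : √(m : ℝ) ≠ 0 := by positivity
    rw [frobNorm_eq_norm, frobNorm_eq_norm, hΦ, sub_sub_cancel, ← hX, ← trace1_sub,
      frobenius_norm_kronecker, frobenius_norm_inv_natCast_smul_one]
    calc (√m)⁻¹ * ‖trace1 (Z - X)‖ ≤ (√m)⁻¹ * (√m * ‖Z - X‖) := by
          gcongr
          exact frobenius_norm_trace1_le _
      _ = ‖Z - X‖ := inv_mul_cancel_left₀ hsqrt _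

/-- `Φ(Z) = Z − (I_m/m) ⊗ (tr_1(Z) − σ)` is the Frobenius least-squares projection of a
Hermitian `Z` onto the affine set of Hermitian matrices with first partial trace `σ`. -/
theorem stmt12 {m n : ℕ} (hm : 0 < m) (hn : 0 < n)
    (Z : Matrix (Fin m × Fin n) (Fin m × Fin n) ℂ) (hZ : Z.IsHermitian)
    (σ : Matrix (Fin n) (Fin n) ℂ) (hσ : σ.IsHermitian)
    (Φ : Matrix (Fin m × Fin n) (Fin m × Fin n) ℂ)
    (hΦ : Φ = Z - ((m : ℂ)⁻¹ • (1 : Matrix (Fin m) (Fin m) ℂ)) ⊗ₖ (trace1 Z - σ)) :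
    trace1 Φ = σ ∧
      ∀ X : Matrix (Fin m × Fin n) (Fin m × Fin n) ℂ,
        X.IsHermitian → trace1 X = σ →
          frobNorm (Z - Φ) ≤ frobNorm (Z - X) :=
  stmt12_general hm Z σ Φ hΦ
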